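/- arXiv:1805.09219 — 2 statements merged into one kernel-verified Lean document; each statement's English description precedes it below -/
import Mathlib

section
/- Assume (H4) and L > 2. Let k ∈ ℕ, a ∈ [0,1), and x̂ ∈ C'_ψ with f^{k+1}(x̂) = x̂. Let 0 < γ ≤ 1/49 and assume 0 < ε ≤ γ L^{−(2k+1)}. Let U := {x ∈ S¹ : d(x, x̂) ≤ √γ L^{−(k+1)}}. Then for every sample ω ∈ Ω: (i) |(f^{k+1}_ω)'(z)| ≤ 2√γ < 1/2 for all z ∈ U; and (ii) d(f^{k+1}_ω(z), x̂) ≤ 7γ L^{−(k+1)} for all z ∈ U; in particular f^{k+1}_ω(U) ⊆ U. -/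
open MeasureTheory Set Filter Topology

noncomputable section

/-! ## Basic circle setup.
We parametrize `S¹ = ℝ/ℤ` by `[0,1)`.  Functions and subsets of `S¹` are represented by
1-periodic functions/subsets of `ℝ`. -/

/-- The circle distance on `ℝ/ℤ`, computed on representatives. -/
def dS1 (x y : ℝ) : ℝ := |x - y - (round (x - y) : ℝ)|

/-- Circle distance from a point to a set (a subset of `ℝ`, viewed 1-periodically). -/
def dS1Set (x : ℝ) (A : Set ℝ) : ℝ := sInf (dS1 x '' A)

/-- The critical set `C'_ψ = {ψ' = 0}` as a subset of `ℝ`. -/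
def Crit (ψ : ℝ → ℝ) : Set ℝ := {x : ℝ | deriv ψ x = 0}

/-- (H1): the critical set is finite (as a subset of `S¹ ≅ [0,1)`). -/
def H1 (ψ : ℝ → ℝ) : Prop := (Crit ψ ∩ Ico (0:ℝ) 1).Finite

/-- (H2): no degenerate critical points. -/
def H2 (ψ : ℝ → ℝ) : Prop := ∀ x ∈ Crit ψ, deriv (deriv ψ) x ≠ 0

/-- (H4): `‖ψ'‖_{C⁰} ≤ 1/10` and `‖ψ''‖_{C⁰} ≤ 1/10`. -/
def H4 (ψ : ℝ → ℝ) : Prop :=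
  (∀ x : ℝ, |deriv ψ x| ≤ 1 / 10) ∧ ∀ x : ℝ, |deriv (deriv ψ) x| ≤ 1 / 10

/-- Standing assumptions on `ψ`: 1-periodicity, `C²` smoothness, (H1), (H2). -/
def PsiReg (ψ : ℝ → ℝ) : Prop :=
  Function.Periodic ψ 1 ∧ ContDiff ℝ 2 ψ ∧ H1 ψ ∧ H2 ψ

/-- The constant `K₁ = K₁(ψ)` with `|ψ'(x)| ≥ K₁ d(x, C'_ψ)`. -/
def K1hyp (ψ : ℝ → ℝ) (K₁ : ℝ) : Prop :=
  0 < K₁ ∧ ∀ x : ℝ, K₁ * dS1Set x (Crit ψ) ≤ |deriv ψ x|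

/-- `‖ψ''‖_{C⁰}`. -/
def psiC2norm (ψ : ℝ → ℝ) : ℝ := ⨆ x : ℝ, |deriv (deriv ψ) x|

/-- The circle map `f = f_{L,a} = Lψ + a (mod 1)`, on representatives in `[0,1)`. -/
def cmap (ψ : ℝ → ℝ) (L a x : ℝ) : ℝ := Int.fract (L * ψ x + a)

/-- The random orbit `X_{n+1} = f_{ω_n}(X_n) = f(X_n + ω_n)` on `S¹ ≅ [0,1)`;
`orbitW ψ L a ω x n = fⁿ_ω(x)`. -/
def orbitW (ψ : ℝ → ℝ) (L a : ℝ) (ω : ℕ → ℝ) (x : ℝ) : ℕ → ℝ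
  | 0 => x
  | n + 1 => cmap ψ L a (orbitW ψ L a ω x n + ω n)

/-- Deterministic iterates `fⁿ(x)`. -/
def detIter (ψ : ℝ → ℝ) (L a x : ℝ) (n : ℕ) : ℝ := orbitW ψ L a (fun _ => 0) x n

/-- Condition `(H3)_{c,k}`: `d(fˡ(x̂), C'_ψ) ≥ c` for all `x̂ ∈ C'_ψ` and `1 ≤ l ≤ k`. -/
def H3cond (ψ : ℝ → ℝ) (L a c : ℝ) (k : ℕ) : Prop :=
  ∀ x ∈ Crit ψ, ∀ l : ℕ, 1 ≤ l → l ≤ k → c ≤ dS1Set (detIter ψ L a x l) (Crit ψ)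

/-- The lifted random orbit `X̃_{n+1} = f̃(X̃_n + ω_n) = Lψ(X̃_n + ω_n) + a` on `ℝ`;
`liftOrbit ψ L a ω x n = f̃ⁿ_ω(x)`. -/
def liftOrbit (ψ : ℝ → ℝ) (L a : ℝ) (ω : ℕ → ℝ) (x : ℝ) : ℕ → ℝ
  | 0 => x
  | n + 1 => L * ψ (liftOrbit ψ L a ω x n + ω n) + a

/-- `|(fⁿ_ω)'(x)|`, computed by the chain rule (the mod-1 projection has derivative 1). -/
def derivAbs (ψ : ℝ → ℝ) (L a : ℝ) (ω : ℕ → ℝ) (x : ℝ) (n : ℕ) : ℝ :=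
  ∏ i ∈ Finset.range n, |L * deriv ψ (orbitW ψ L a ω x i + ω i)|

/-- `log |(fⁿ_ω)'(x)|`. -/
def logDerivSum (ψ : ℝ → ℝ) (L a : ℝ) (ω : ℕ → ℝ) (x : ℝ) (n : ℕ) : ℝ :=
  ∑ i ∈ Finset.range n, Real.log |L * deriv ψ (orbitW ψ L a ω x i + ω i)|

/-- `log |(f̃ⁿ_ω)'(x)|` along the lifted orbit. -/
def logDerivSumLift (ψ : ℝ → ℝ) (L a : ℝ) (ω : ℕ → ℝ) (x : ℝ) (n : ℕ) : ℝ :=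
  ∑ i ∈ Finset.range n, Real.log |L * deriv ψ (liftOrbit ψ L a ω x i + ω i)|

/-- The (signed) derivative `(f̃ⁿ_ω)'(x)` of the lifted composition. -/
def derivLift (ψ : ℝ → ℝ) (L a : ℝ) (ω : ℕ → ℝ) (x : ℝ) (n : ℕ) : ℝ :=
  ∏ i ∈ Finset.range n, (L * deriv ψ (liftOrbit ψ L a ω x i + ω i))

/-- The uniform distribution `ν^ε` on `[-ε, ε]`. -/
def unif (ε : ℝ) : Measure ℝ :=
  ENNReal.ofReal (1 / (2 * ε)) • volume.restrict (Icc (-ε) ε)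

/-- `P = ν^{⊗ ℕ}`: the coordinates of `ω` are i.i.d. with law `ν` under `P`. -/
def IsProductOf (P : Measure (ℕ → ℝ)) (ν : Measure ℝ) : Prop :=
  IsProbabilityMeasure P ∧
    ∀ (s : Finset ℕ) (A : ℕ → Set ℝ), (∀ i, MeasurableSet (A i)) →
      P {ω : ℕ → ℝ | ∀ i ∈ s, ω i ∈ A i} = ∏ i ∈ s, ν (A i)

/-- A stationary probability measure for the Markov chain `X_{n+1} = f(X_n + ω_n)` on
`S¹ ≅ [0,1)`. -/
def IsStationaryCircle (ψ : ℝ → ℝ) (L a ε : ℝ) (μ : Measure ℝ) : Prop :=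
  IsProbabilityMeasure μ ∧ μ (Ico (0:ℝ) 1) = 1 ∧
    ∀ A : Set ℝ, MeasurableSet A →
      μ A = ∫⁻ x, unif ε {w : ℝ | cmap ψ L a (x + w) ∈ A} ∂μ

/-- `μ` is supported on all of `S¹`. -/
def FullSupport (μ : Measure ℝ) : Prop :=
  ∀ U : Set ℝ, IsOpen U → (U ∩ Ico (0:ℝ) 1).Nonempty → 0 < μ U

/-- The neighborhood `B(η) = {x : d(x, C'_ψ) ≤ K₁⁻¹ L^η}` of the critical set. -/
def Bset (ψ : ℝ → ℝ) (K₁ L η : ℝ) : Set ℝ := {x : ℝ | dS1Set x (Crit ψ) ≤ K₁⁻¹ * L ^ η}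

/-- `G = S¹ ∖ B(-β)`. -/
def Gset (ψ : ℝ → ℝ) (K₁ L β : ℝ) : Set ℝ := (Bset ψ K₁ L (-β))ᶜ

/-- `B^l` for `0 ≤ l ≤ k` (`B⁰ = I`). -/
def BlSet (ψ : ℝ → ℝ) (K₁ L β : ℝ) (k l : ℕ) : Set ℝ :=
  if l = k then Bset ψ K₁ L (-(k : ℝ) / 2 - β)
  else Bset ψ K₁ L (-(l : ℝ) / 2 - β) \ Bset ψ K₁ L (-((l : ℝ) + 1) / 2 - β)

/-- The shifted set `A_w = A - w`. -/
def shiftSet (A : Set ℝ) (w : ℝ) : Set ℝ := {x : ℝ | x + w ∈ A}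
/-! ## The partition `R` into connected components of `G, B⁰, …, B^k`. -/

open scoped Classical in
/-- The element of `{G, B⁰, …, B^k}` containing `x`. -/
def pieceOf (ψ : ℝ → ℝ) (K₁ L β : ℝ) (k : ℕ) (x : ℝ) : Set ℝ :=
  if x ∈ Gset ψ K₁ L β then Gset ψ K₁ L β
  else if h : ∃ l : ℕ, l ≤ k ∧ x ∈ BlSet ψ K₁ L β k l then BlSet ψ K₁ L β k h.choose
  else ∅

/-- The atom of the partition `R` containing `x`: the connected component of the piece of
`{G, B⁰, …, B^k}` containing `x`. -/
def atomR (ψ : ℝ → ℝ) (K₁ L β : ℝ) (k : ℕ) (x : ℝ) : Set ℝ :=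
  connectedComponentIn (pieceOf ψ K₁ L β k x) x

/-- Length of a subset of `ℝ`. -/
def sLen (S : Set ℝ) : ℝ := (volume S).toReal

/-- The atom of the shifted partition `R_w` containing `z`. -/
def atomRshift (ψ : ℝ → ℝ) (K₁ L β : ℝ) (k : ℕ) (w z : ℝ) : Set ℝ :=
  {t : ℝ | t + w ∈ atomR ψ K₁ L β k (z + w)}

/-- `J` is a longest atom of `R_w` restricted to `Jbar`. -/
def IsLongestAtom (ψ : ℝ → ℝ) (K₁ L β : ℝ) (k : ℕ) (w : ℝ) (Jbar J : Set ℝ) : Prop :=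
  (∃ z ∈ Jbar, J = atomRshift ψ K₁ L β k w z ∩ Jbar) ∧
    ∀ z ∈ Jbar, sLen (atomRshift ψ K₁ L β k w z ∩ Jbar) ≤ sLen J

/-- The random interval process `(J_i, J̄_i)` of Section 3.2:
`J₀ = X₀ + [-ε,ε]`, `J̄₁ = f̃(J₀)`, and for `i ≥ 1`, `J_i` is a longest atom of `R_{ω_i}|_{J̄_i}`
and `J̄_{i+1} = f̃_{ω_i}(J_i)`. -/
def IntervalProc (ψ : ℝ → ℝ) (L a K₁ β ε : ℝ) (k : ℕ) (X₀ : ℝ) (ω : ℕ → ℝ)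
    (J Jbar : ℕ → Set ℝ) : Prop :=
  J 0 = Icc (X₀ - ε) (X₀ + ε) ∧
    Jbar 1 = (fun x : ℝ => L * ψ x + a) '' J 0 ∧
    ∀ i : ℕ, 1 ≤ i →
      IsLongestAtom ψ K₁ L β k (ω i) (Jbar i) (J i) ∧
        Jbar (i + 1) = (fun x : ℝ => L * ψ (x + ω i) + a) '' J i

/-! ## The partition `𝒫` of Section 4.1 and the merged partitions `𝒫_ω(I)`. -/

/-- A partition `𝒫` of `S¹` (regarded 1-periodically on `ℝ`) as in Section 4.1(A):
atoms are intervals subordinate to `{G, B⁰, …, B^k}`; on `G` and `B^k` the atoms are the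
connected components, and each component of `B^l` (`l < k`) is divided into intervals of
length in `[(l+1)⁻² L^{-(l+3)/2-β}, 2(l+1)⁻² L^{-(l+3)/2-β}]`. -/
structure GoodPartition (ψ : ℝ → ℝ) (K₁ L β : ℝ) (k : ℕ) (PP : Set (Set ℝ)) : Prop where
  nonempty : ∀ C ∈ PP, C.Nonempty
  interval : ∀ C ∈ PP, C.OrdConnected
  disj : PP.PairwiseDisjoint id
  cover : ⋃₀ PP = univ
  periodic : ∀ C ∈ PP, (fun x : ℝ => x + 1) '' C ∈ PP
  subordinate : ∀ C ∈ PP, C ⊆ Gset ψ K₁ L β ∨ ∃ l ≤ k, C ⊆ BlSet ψ K₁ L β k l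
  g_atoms : ∀ C ∈ PP, C ⊆ Gset ψ K₁ L β → ∀ x ∈ C,
    C = connectedComponentIn (Gset ψ K₁ L β) x
  bk_atoms : ∀ C ∈ PP, C ⊆ BlSet ψ K₁ L β k k → ∀ x ∈ C,
    C = connectedComponentIn (BlSet ψ K₁ L β k k) x
  bl_len : ∀ C ∈ PP, ∀ l : ℕ, l < k → C ⊆ BlSet ψ K₁ L β k l →
    (((l : ℝ) + 1) ^ 2)⁻¹ * L ^ (-((l : ℝ) + 3) / 2 - β) ≤ sLen C ∧
      sLen C ≤ 2 * (((l : ℝ) + 1) ^ 2)⁻¹ * L ^ (-((l : ℝ) + 3) / 2 - β)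

/-- The non-singleton atoms of the shifted partition `𝒫_w` restricted to `I`. -/
def restAtoms (PP : Set (Set ℝ)) (w : ℝ) (I : Set ℝ) : Set (Set ℝ) :=
  {A : Set ℝ | (∃ C ∈ PP, A = ((fun x : ℝ => x - w) '' C) ∩ I) ∧ A.Nontrivial}

/-- `A` lies (weakly) to the left of `B`. -/
def setBefore (A B : Set ℝ) : Prop := ∀ a ∈ A, ∀ b ∈ B, a ≤ b

/-- `A` is one of the two leftmost members of `𝒜`. -/
def TwoLeft (𝒜 : Set (Set ℝ)) (A : Set ℝ) : Prop :=
  A ∈ 𝒜 ∧ {B ∈ 𝒜 | B ≠ A ∧ setBefore B A}.Subsingleton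

/-- `A` is one of the two rightmost members of `𝒜`. -/
def TwoRight (𝒜 : Set (Set ℝ)) (A : Set ℝ) : Prop :=
  A ∈ 𝒜 ∧ {B ∈ 𝒜 | B ≠ A ∧ setBefore A B}.Subsingleton

/-- `𝒜` has at least four members. -/
def AtLeastFour (𝒜 : Set (Set ℝ)) : Prop :=
  ∃ s : Finset (Set ℝ), ↑s ⊆ 𝒜 ∧ s.card = 4

/-- `S` is an atom of the merged partition `𝒫_w(I)` (whose atoms `𝒜 = restAtoms PP w I`
are merged at the two ends, and which is trivial if `N ≤ 3`). -/
def MergedAtom (𝒜 : Set (Set ℝ)) (I S : Set ℝ) : Prop :=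
  (¬ AtLeastFour 𝒜 ∧ S = I) ∨
    (AtLeastFour 𝒜 ∧
      ((∃ A B : Set ℝ, A ∈ 𝒜 ∧ B ∈ 𝒜 ∧ A ≠ B ∧ TwoLeft 𝒜 A ∧ TwoLeft 𝒜 B ∧ S = A ∪ B) ∨
        (∃ A B : Set ℝ, A ∈ 𝒜 ∧ B ∈ 𝒜 ∧ A ≠ B ∧ TwoRight 𝒜 A ∧ TwoRight 𝒜 B ∧ S = A ∪ B) ∨
        (S ∈ 𝒜 ∧ ¬ TwoLeft 𝒜 S ∧ ¬ TwoRight 𝒜 S)))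

/-! ## Itineraries (Section 4.1(B),(C)). -/

/-- The image `f̃ʲ_ω(A)`. -/
def Fim (ψ : ℝ → ℝ) (L a : ℝ) (ω : ℕ → ℝ) (j : ℕ) (A : Set ℝ) : Set ℝ :=
  (fun x : ℝ => liftOrbit ψ L a ω x j) '' A

/-- `C 0 ⊇ C 1 ⊇ ⋯ ⊇ C n` is a chain of itinerary atoms: `C i ∈ 𝒬_i` for `i ≤ n`. -/
def AtomChain (ψ : ℝ → ℝ) (L a : ℝ) (PP : Set (Set ℝ)) (ω : ℕ → ℝ) (I : Set ℝ)
    (n : ℕ) (C : ℕ → Set ℝ) : Prop :=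
  MergedAtom (restAtoms PP (ω 0) I) I (C 0) ∧
    ∀ i : ℕ, i < n →
      ∃ S : Set ℝ,
        MergedAtom (restAtoms PP (ω (i + 1)) (Fim ψ L a ω (i + 1) (C i)))
            (Fim ψ L a ω (i + 1) (C i)) S ∧
          C (i + 1) = C i ∩ (fun x : ℝ => liftOrbit ψ L a ω x (i + 1)) ⁻¹' S

/-- `τ ≥ n` on the chain `C`: no near-visit to `B^k` before time `n`. -/
def ChainTauGE (ψ : ℝ → ℝ) (K₁ L a β : ℝ) (k : ℕ) (ω : ℕ → ℝ) (C : ℕ → Set ℝ)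
    (n : ℕ) : Prop :=
  ∀ i : ℕ, i < n → Fim ψ L a ω i (C i) ∩ shiftSet (BlSet ψ K₁ L β k k) (ω i) = ∅

/-- The chain `C` is bound at time `t`: `t ∈ [t_j + 1, t_j + p_j]` for some bound period. -/
def ChainBoundAt (ψ : ℝ → ℝ) (K₁ L a β : ℝ) (k : ℕ) (ω : ℕ → ℝ) (C : ℕ → Set ℝ)
    (t : ℕ) : Prop :=
  ∃ s : ℕ, s < t ∧ ∃ l : ℕ, 1 ≤ l ∧ l ≤ k ∧
    (Fim ψ L a ω s (C s) ∩ shiftSet (BlSet ψ K₁ L β k l) (ω s)).Nonempty ∧ t ≤ s + l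

/-! ## The supporting interval process `(I_n)` of Section 5.1. -/

open scoped Classical in
/-- The shift used when mapping `I_n` forward: `0` if `I_n` is a fresh noise interval
(`n = 0` or `n - 1` was a near-visit to `B^k`), and `ω_n` otherwise. -/
def stepShift (ψ : ℝ → ℝ) (K₁ L β : ℝ) (k : ℕ) (ω : ℕ → ℝ) (I : ℕ → Set ℝ) : ℕ → ℝ
  | 0 => 0
  | n + 1 =>
    if (I n ∩ shiftSet (BlSet ψ K₁ L β k k) (ω n)).Nonempty then 0 else ω (n + 1)

/-- The supporting interval process `(I_n)` of Section 5.1: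
`I₀ = X̃₀ + [-ε,ε]`; if `I_n` meets `B^k_{ω_n}` then `I_{n+1} = X̃_{n+1} + [-ε,ε]`, and
otherwise `I_{n+1}` is the atom of `𝒫_{ω_{n+1}}(f̃_{(·)}(I_n))` containing `X̃_{n+1}`. -/
def SuppProc (ψ : ℝ → ℝ) (L a K₁ β ε : ℝ) (k : ℕ) (PP : Set (Set ℝ)) (X₀ : ℝ)
    (ω : ℕ → ℝ) (I : ℕ → Set ℝ) : Prop :=
  I 0 = Icc (X₀ - ε) (X₀ + ε) ∧
    ∀ n : ℕ,
      ((I n ∩ shiftSet (BlSet ψ K₁ L β k k) (ω n)).Nonempty →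
          I (n + 1) =
            Icc (liftOrbit ψ L a ω X₀ (n + 1) - ε) (liftOrbit ψ L a ω X₀ (n + 1) + ε)) ∧
      (¬ (I n ∩ shiftSet (BlSet ψ K₁ L β k k) (ω n)).Nonempty →
          MergedAtom
              (restAtoms PP (ω (n + 1))
                ((fun x : ℝ => L * ψ (x + stepShift ψ K₁ L β k ω I n) + a) '' I n))
              ((fun x : ℝ => L * ψ (x + stepShift ψ K₁ L β k ω I n) + a) '' I n)
              (I (n + 1)) ∧
            liftOrbit ψ L a ω X₀ (n + 1) ∈ I (n + 1))

/-- `τ_j = m` for the supporting interval process: `I_m` meets `B^k_{ω_m}`, `m ≥ 1`, and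
exactly `j - 1` earlier positive times do so. -/
def TauEq (ψ : ℝ → ℝ) (K₁ L β : ℝ) (k : ℕ) (ω : ℕ → ℝ) (I : ℕ → Set ℝ)
    (j m : ℕ) : Prop :=
  0 < m ∧ (I m ∩ shiftSet (BlSet ψ K₁ L β k k) (ω m)).Nonempty ∧
    ∃ s : Finset ℕ,
      (∀ i : ℕ, i ∈ s ↔
        (0 < i ∧ i < m ∧ (I i ∩ shiftSet (BlSet ψ K₁ L β k k) (ω i)).Nonempty)) ∧
      s.card = j - 1

/-!
Near the critical point `xh` the map `ψ` is quadratically flat: `|ψ u - ψ xh| ≤ d(u, xh)² / 10`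
and `|ψ' u| ≤ d(u, xh) / 10`. So the first step of `f_ω` sends the `√γ L^{-(k+1)}`-ball around
`xh`, enlarged by the noise, to within `O(γ L^{-(2k+1)})` of `f(xh)`. Each of the remaining `k`
steps expands distances by at most `L/10` and the noise adds at most `ε ≤ γ L^{-(2k+1)}`, so after
`k + 1` steps the orbit is `O(γ L^{-(k+1)})`-close to `f^{k+1}(xh) = xh`. In the same way the
derivative of `f^{k+1}_ω` is the small first factor `L |ψ'(z + ω₀)|` times at most `(L/10)^k`.
-/

section CircleDistance

lemma dS1_nonneg (x y : ℝ) : 0 ≤ dS1 x y := abs_nonneg _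

lemma dS1_le_abs_sub_sub_intCast (x y : ℝ) (j : ℤ) : dS1 x y ≤ |x - y - j| := round_le _ j

lemma dS1_eq_abs_sub_add_round (x y : ℝ) : dS1 x y = |x - (y + round (x - y))| := by
  rw [dS1, sub_add_eq_sub_sub]

lemma dS1_fract_fract_le (A B : ℝ) : dS1 (Int.fract A) (Int.fract B) ≤ |A - B| := by
  convert dS1_le_abs_sub_sub_intCast (Int.fract A) (Int.fract B) (⌊B⌋ - ⌊A⌋) using 2
  rw [Int.fract, Int.fract]; push_cast; ring

lemma dS1_add_le (x y t : ℝ) : dS1 (x + t) y ≤ dS1 x y + |t| :=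
  calc dS1 (x + t) y ≤ |x - y - round (x - y) + t| := by
        convert dS1_le_abs_sub_sub_intCast (x + t) y (round (x - y)) using 2; ring
    _ ≤ dS1 x y + |t| := abs_add_le _ _

end CircleDistance

namespace Function.Periodic

variable {g : ℝ → ℝ}

protected lemma deriv (hg : Periodic g 1) : Periodic (deriv g) 1 := fun u => by
  rw [← deriv_comp_add_const, show (fun y => g (y + 1)) = g from funext hg]

lemma abs_sub_le_mul_dS1 (hg : Periodic g 1) (hd : Differentiable ℝ g) {C : ℝ}
    (hC : ∀ x, |deriv g x| ≤ C) (u v : ℝ) : |g u - g v| ≤ C * dS1 u v := by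
  have hv : g (v + round (u - v)) = g v := by simpa using hg.int_mul (round (u - v)) v
  rw [dS1_eq_abs_sub_add_round, ← hv]
  simpa only [Real.norm_eq_abs] using convex_univ.norm_image_sub_le_of_norm_deriv_le
    (fun x _ => hd x) (fun x _ => hC x) (mem_univ _) (mem_univ u)

/-- Mean value theorem on the ball of radius `d(u, c)` around the lift of `c` closest to `u`. -/
lemma abs_sub_le_mul_dS1_sq (hg : Periodic g 1) (hd : Differentiable ℝ g) {K c : ℝ}
    (hK0 : 0 ≤ K) (hK : ∀ t, |deriv g t| ≤ K * dS1 t c) (u : ℝ) :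
    |g u - g c| ≤ K * dS1 u c ^ 2 := by
  set c' : ℝ := c + round (u - c)
  have hc' : g c' = g c := by simpa using hg.int_mul (round (u - c)) c
  have huc' : |u - c'| = dS1 u c := (dS1_eq_abs_sub_add_round u c).symm
  have hball : ∀ t ∈ Metric.closedBall c' (dS1 u c), ‖deriv g t‖ ≤ K * dS1 u c := by
    intro t ht
    rw [Metric.mem_closedBall, Real.dist_eq] at ht
    have htc : dS1 t c ≤ |t - c'| := by
      simpa only [c', sub_add_eq_sub_sub] using dS1_le_abs_sub_sub_intCast t c (round (u - c))
    exact (hK t).trans (mul_le_mul_of_nonneg_left (htc.trans ht) hK0)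
  have hmvt := (convex_closedBall c' (dS1 u c)).norm_image_sub_le_of_norm_deriv_le
    (fun t _ => hd t) hball (Metric.mem_closedBall_self (dS1_nonneg u c))
    (by rw [Metric.mem_closedBall, Real.dist_eq, huc'])
  rw [Real.norm_eq_abs, Real.norm_eq_abs, huc', hc'] at hmvt
  linarith

end Function.Periodic

section CriticalPoint

variable {ψ : ℝ → ℝ} {c : ℝ}

lemma H4.abs_deriv_le_dS1 (hH4 : H4 ψ) (hper : Function.Periodic ψ 1) (hsm : ContDiff ℝ 2 ψ)
    (hc : deriv ψ c = 0) (u : ℝ) : |deriv ψ u| ≤ 1 / 10 * dS1 u c := by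
  simpa [hc] using hper.deriv.abs_sub_le_mul_dS1 hsm.differentiable_deriv_two hH4.2 u c

lemma H4.abs_sub_le_dS1_sq (hH4 : H4 ψ) (hper : Function.Periodic ψ 1) (hsm : ContDiff ℝ 2 ψ)
    (hc : deriv ψ c = 0) (u : ℝ) : |ψ u - ψ c| ≤ 1 / 10 * dS1 u c ^ 2 :=
  hper.abs_sub_le_mul_dS1_sq (hsm.differentiable two_ne_zero) (by norm_num)
    (hH4.abs_deriv_le_dS1 hper hsm hc) u

end CriticalPoint

lemma le_pow_mul_add_of_le_div_ten_mul_add {L e : ℝ} {D : ℕ → ℝ} (hL : 1 ≤ L) (he : 0 ≤ e)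
    (hD : ∀ n, D (n + 1) ≤ L / 10 * (D n + e)) (n : ℕ) :
    D n ≤ (L / 10) ^ n * D 0 + e * L ^ n / 4 := by
  induction n with
  | zero => simp only [pow_zero, one_mul, mul_one]; linarith
  | succ n ih =>
    have hLn : 1 ≤ L ^ n := one_le_pow₀ hL
    calc D (n + 1) ≤ L / 10 * (D n + e) := hD n
      _ ≤ L / 10 * ((L / 10) ^ n * D 0 + e * L ^ n / 4 + e) := by gcongr
      _ ≤ (L / 10) ^ (n + 1) * D 0 + e * L ^ (n + 1) / 4 := by
        rw [pow_succ, pow_succ]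
        nlinarith [mul_nonneg (mul_nonneg he (zero_le_one.trans hL))
          (by linarith : (0 : ℝ) ≤ 9 * L ^ n - 4)]

section NoisyOrbit

variable {ψ : ℝ → ℝ} {L a c : ℝ}

lemma dS1_cmap_le (hL : 0 ≤ L) (u v : ℝ) :
    dS1 (cmap ψ L a u) (cmap ψ L a v) ≤ L * |ψ u - ψ v| := by
  refine (dS1_fract_fract_le _ _).trans_eq ?_
  rw [show L * ψ u + a - (L * ψ v + a) = L * (ψ u - ψ v) by ring, abs_mul, abs_of_nonneg hL]

lemma dS1_orbitW_succ_le (hper : Function.Periodic ψ 1) (hd : Differentiable ℝ ψ) (hH4 : H4 ψ)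
    (hL : 0 ≤ L) (ω : ℕ → ℝ) (x y : ℝ) (n : ℕ) :
    dS1 (orbitW ψ L a ω x (n + 1)) (detIter ψ L a y (n + 1)) ≤
      L / 10 * (dS1 (orbitW ψ L a ω x n) (detIter ψ L a y n) + |ω n|) :=
  calc dS1 (orbitW ψ L a ω x (n + 1)) (detIter ψ L a y (n + 1))
      ≤ L * |ψ (orbitW ψ L a ω x n + ω n) - ψ (detIter ψ L a y n + 0)| := dS1_cmap_le hL _ _
    _ ≤ L * (1 / 10 * dS1 (orbitW ψ L a ω x n + ω n) (detIter ψ L a y n)) := by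
        rw [add_zero]; exact mul_le_mul_of_nonneg_left (hper.abs_sub_le_mul_dS1 hd hH4.1 _ _) hL
    _ ≤ L / 10 * (dS1 (orbitW ψ L a ω x n) (detIter ψ L a y n) + |ω n|) := by
        rw [← mul_assoc, mul_one_div]; gcongr; exact dS1_add_le _ _ _

lemma dS1_orbitW_one_le (hper : Function.Periodic ψ 1) (hsm : ContDiff ℝ 2 ψ) (hH4 : H4 ψ)
    (hL : 0 ≤ L) (hc : deriv ψ c = 0) (ω : ℕ → ℝ) (z : ℝ) :
    dS1 (orbitW ψ L a ω z 1) (detIter ψ L a c 1) ≤ L / 10 * dS1 (z + ω 0) c ^ 2 :=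
  calc dS1 (orbitW ψ L a ω z 1) (detIter ψ L a c 1) ≤ L * |ψ (z + ω 0) - ψ (c + 0)| :=
        dS1_cmap_le hL _ _
    _ ≤ L * (1 / 10 * dS1 (z + ω 0) c ^ 2) := by
        rw [add_zero]; exact mul_le_mul_of_nonneg_left (hH4.abs_sub_le_dS1_sq hper hsm hc _) hL
    _ = L / 10 * dS1 (z + ω 0) c ^ 2 := by ring

lemma dS1_orbitW_detIter_le (hper : Function.Periodic ψ 1) (hsm : ContDiff ℝ 2 ψ) (hH4 : H4 ψ)
    (hL : 1 ≤ L) (hc : deriv ψ c = 0) {ε : ℝ} {ω : ℕ → ℝ} (hω : ∀ i, |ω i| ≤ ε) (z : ℝ)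
    (n : ℕ) :
    dS1 (orbitW ψ L a ω z (n + 1)) (detIter ψ L a c (n + 1)) ≤
      (L / 10) ^ (n + 1) * dS1 (z + ω 0) c ^ 2 + ε * L ^ n / 4 := by
  have hL0 : 0 ≤ L := zero_le_one.trans hL
  have hrec := le_pow_mul_add_of_le_div_ten_mul_add
    (D := fun n => dS1 (orbitW ψ L a ω z (n + 1)) (detIter ψ L a c (n + 1))) hL
    ((abs_nonneg _).trans (hω 0))
    (fun n => (dS1_orbitW_succ_le hper (hsm.differentiable two_ne_zero) hH4 hL0 ω z c _).trans
      (by gcongr; exact hω _)) n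
  refine hrec.trans ?_
  rw [pow_succ, mul_assoc]
  gcongr
  exact dS1_orbitW_one_le hper hsm hH4 hL0 hc ω z

lemma derivAbs_succ_le (hper : Function.Periodic ψ 1) (hsm : ContDiff ℝ 2 ψ) (hH4 : H4 ψ)
    (hL : 0 ≤ L) (hc : deriv ψ c = 0) (ω : ℕ → ℝ) (z : ℝ) (n : ℕ) :
    derivAbs ψ L a ω z (n + 1) ≤ (L / 10) ^ (n + 1) * dS1 (z + ω 0) c := by
  rw [derivAbs, Finset.prod_range_succ', pow_succ, mul_assoc]
  refine mul_le_mul ?_ ?_ (abs_nonneg _) (by positivity)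
  · calc ∏ i ∈ Finset.range n, |L * deriv ψ (orbitW ψ L a ω z (i + 1) + ω (i + 1))|
        ≤ ∏ _i ∈ Finset.range n, L / 10 := by
          refine Finset.prod_le_prod (fun _ _ => abs_nonneg _) fun i _ => ?_
          rw [abs_mul, abs_of_nonneg hL, div_eq_mul_one_div]
          exact mul_le_mul_of_nonneg_left (hH4.1 _) hL
      _ = (L / 10) ^ n := by rw [Finset.prod_const, Finset.card_range]
  · rw [abs_mul, abs_of_nonneg hL, div_mul_eq_mul_div, mul_div_assoc, ← one_div_mul_eq_div]
    exact mul_le_mul_of_nonneg_left (hH4.abs_deriv_le_dS1 hper hsm hc _) hL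

end NoisyOrbit

lemma Real.pow_mul_rpow_neg_natCast {L : ℝ} (hL : 0 < L) (n : ℕ) :
    L ^ n * L ^ (-(n : ℝ)) = 1 := by
  rw [Real.rpow_neg hL.le, Real.rpow_natCast, mul_inv_cancel₀ (by positivity)]

lemma mul_pow_le_of_le_mul_rpow {L γ ε : ℝ} {k : ℕ} (hL : 0 < L)
    (hε : ε ≤ γ * L ^ (-(2 * (k : ℝ) + 1))) : ε * L ^ k ≤ γ * L ^ (-((k : ℝ) + 1)) :=
  calc ε * L ^ k ≤ γ * L ^ (-(2 * (k : ℝ) + 1)) * L ^ k := by gcongr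
    _ = γ * L ^ (-((k : ℝ) + 1)) := by
      rw [mul_assoc, ← Real.rpow_natCast, ← Real.rpow_add hL]
      ring_nf

theorem sink_estimates_general (ψ : ℝ → ℝ) (hper : Function.Periodic ψ 1) (hsm : ContDiff ℝ 2 ψ)
    (hH4 : H4 ψ)
    (L a : ℝ) (hL : 2 < L)
    (k : ℕ) (xh : ℝ) (hxh : xh ∈ Crit ψ ∩ Ico (0:ℝ) 1)
    (hper' : detIter ψ L a xh (k + 1) = xh)
    (γ ε : ℝ) (hγ : 0 < γ) (hγ' : γ ≤ 1 / 49)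
    (hε' : ε ≤ γ * L ^ (-(2 * (k : ℝ) + 1)))
    (ω : ℕ → ℝ) (hω : ∀ i, |ω i| ≤ ε) :
    ∀ z : ℝ, dS1 z xh ≤ Real.sqrt γ * L ^ (-((k : ℝ) + 1)) →
      (derivAbs ψ L a ω z (k + 1) ≤ 2 * Real.sqrt γ ∧ 2 * Real.sqrt γ < 1 / 2) ∧
        dS1 (orbitW ψ L a ω z (k + 1)) xh ≤ 7 * γ * L ^ (-((k : ℝ) + 1)) ∧
        dS1 (orbitW ψ L a ω z (k + 1)) xh ≤ Real.sqrt γ * L ^ (-((k : ℝ) + 1)) := by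
  intro z hz
  have hL0 : 0 < L := by linarith
  set s := Real.sqrt γ
  set ρ := L ^ (-((k : ℝ) + 1))
  have hs0 : 0 ≤ s := Real.sqrt_nonneg γ
  have hs : s ≤ 1 / 7 := Real.sqrt_le_iff.mpr ⟨by norm_num, by linarith⟩
  have hγs : γ = s * s := (Real.mul_self_sqrt hγ.le).symm
  have hρ0 : 0 < ρ := Real.rpow_pos_of_pos hL0 _
  have hNρ : L ^ (k + 1) * ρ = 1 := by
    convert Real.pow_mul_rpow_neg_natCast hL0 (k + 1) using 3
    push_cast; rfl
  have hεLk : ε * L ^ k ≤ γ * ρ := mul_pow_le_of_le_mul_rpow hL0 hε'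
  have hεs : ε ≤ s / 7 * ρ := by
    have hLk : 1 ≤ L ^ k := one_le_pow₀ (by linarith)
    nlinarith [hω 0, abs_nonneg (ω 0), mul_le_mul_of_nonneg_right hs (mul_nonneg hs0 hρ0.le)]
  have hz' : dS1 (z + ω 0) xh ≤ 8 / 7 * s * ρ := by linarith [dS1_add_le z xh (ω 0), hω 0]
  have hpow : (L / 10) ^ (k + 1) ≤ L ^ (k + 1) := pow_le_pow_left₀ (by positivity) (by linarith) _
  have hderiv : derivAbs ψ L a ω z (k + 1) ≤ 8 / 7 * s := by
    have h := (derivAbs_succ_le (a := a) hper hsm hH4 hL0.le hxh.1 ω z k).trans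
      (mul_le_mul hpow hz' (dS1_nonneg _ _) (by positivity))
    linear_combination h + 8 / 7 * s * hNρ
  have hdist : dS1 (orbitW ψ L a ω z (k + 1)) xh ≤ 7 * γ * ρ := by
    have h := dS1_orbitW_detIter_le (a := a) hper hsm hH4 (one_le_two.trans hL.le) hxh.1 hω z k
    rw [hper'] at h
    have hz'sq := pow_le_pow_left₀ (dS1_nonneg _ _) hz' 2
    have hN : L ^ (k + 1) * (8 / 7 * s * ρ) ^ 2 = 64 / 49 * γ * ρ := by
      rw [hγs]; linear_combination 64 / 49 * s * s * ρ * hNρ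
    linarith [mul_le_mul hpow hz'sq (sq_nonneg _) (by positivity), mul_pos hγ hρ0]
  refine ⟨⟨by linarith, by linarith⟩, hdist, hdist.trans ?_⟩
  rw [hγs]
  gcongr
  nlinarith

/-- The key estimates in the proof of Proposition 3.1.  Assume (H4) and `L > 2`; let
`f^{k+1}(xh) = xh` with `xh ∈ C'_ψ`, `0 < γ ≤ 1/49` and `0 < ε ≤ γ L^{-(2k+1)}`, and let
`U = {d(·, xh) ≤ √γ L^{-(k+1)}}`.  Then for every sample `ω`: (i) `|(f^{k+1}_ω)'(z)| ≤ 2√γ <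
1/2` on `U`; (ii) `d(f^{k+1}_ω(z), xh) ≤ 7γ L^{-(k+1)}` on `U`; in particular
`f^{k+1}_ω(U) ⊆ U`. -/
theorem sink_estimates (ψ : ℝ → ℝ) (hper : Function.Periodic ψ 1) (hsm : ContDiff ℝ 2 ψ)
    (h1 : H1 ψ) (h2 : H2 ψ) (hH4 : H4 ψ)
    (L a : ℝ) (hL : 2 < L) (ha : a ∈ Ico (0:ℝ) 1)
    (k : ℕ) (hk : 1 ≤ k) (xh : ℝ) (hxh : xh ∈ Crit ψ ∩ Ico (0:ℝ) 1)
    (hper' : detIter ψ L a xh (k + 1) = xh)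
    (γ ε : ℝ) (hγ : 0 < γ) (hγ' : γ ≤ 1 / 49)
    (hε : 0 < ε) (hε' : ε ≤ γ * L ^ (-(2 * (k : ℝ) + 1)))
    (ω : ℕ → ℝ) (hω : ∀ i, |ω i| ≤ ε) :
    ∀ z : ℝ, dS1 z xh ≤ Real.sqrt γ * L ^ (-((k : ℝ) + 1)) →
      (derivAbs ψ L a ω z (k + 1) ≤ 2 * Real.sqrt γ ∧ 2 * Real.sqrt γ < 1 / 2) ∧
        dS1 (orbitW ψ L a ω z (k + 1)) xh ≤ 7 * γ * L ^ (-((k : ℝ) + 1)) ∧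
        dS1 (orbitW ψ L a ω z (k + 1)) xh ≤ Real.sqrt γ * L ^ (-((k : ℝ) + 1)) :=
  sink_estimates_general ψ hper hsm hH4 L a hL k xh hxh hper' γ ε hγ hγ' hε' ω hω
end
end

section
/- There exists L₀ = L₀(ψ) such that for all L ≥ L₀ the following holds. Let η ∈ [−3/4, 0], let ω ∈ Ω, let y, y' ∈ S¹, let i ≥ 1, and let J be an interval with endpoints y and y'. Assume that for every 0 ≤ j < i the shifted image f^j_ω(J) + ω_j is contained in the complement of B(η). Then |log( (f^i_ω)'(y) / (f^i_ω)'(y') )| ≤ 2 ‖ψ''‖_{C⁰} L^{−1−2η} |f̃^i_ω(y) − f̃^i_ω(y')|. -/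
open MeasureTheory Set Filter Topology

noncomputable section

/-! Off `B(η)` we have `|ψ'| ≥ L^η`, so each map `f̃_{ω_j}` stretches the distance between the
two orbits by at least `L^{1+η} ≥ 2`, while `log |Lψ'|` is `‖ψ''‖ L^{-η}`-Lipschitz there.
Hence the `j`-th term of the log-derivative difference is at most `‖ψ''‖ L^{-η}` times the
distance at time `j`, and these distances, read backwards from time `i`, are dominated by a
geometric series of ratio `L^{-1-η} ≤ 1/2`, whose sum is at most `2 L^{-1-η}` times the
distance at time `i`. -/

theorem abs_sub_le_abs_image_sub_of_le_abs_deriv {φ : ℝ → ℝ} (hφ : Differentiable ℝ φ)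
    {m u v : ℝ} (hm : ∀ t ∈ uIcc u v, m ≤ |deriv φ t|) :
    m * |u - v| ≤ |φ u - φ v| := by
  wlog huv : u < v generalizing u v
  · rcases (not_lt.mp huv).eq_or_lt with rfl | hvu
    · simp
    · rw [abs_sub_comm u, abs_sub_comm (φ u)]
      exact this (by rwa [uIcc_comm]) hvu
  obtain ⟨c, hc, hslope⟩ :=
    exists_deriv_eq_slope φ huv hφ.continuous.continuousOn hφ.differentiableOn
  have hvu : 0 < v - u := sub_pos.mpr huv
  calc m * |u - v| ≤ |deriv φ c| * (v - u) := by
        rw [abs_sub_comm, abs_of_pos hvu]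
        exact mul_le_mul_of_nonneg_right (hm c (Ioo_subset_Icc_self.trans Icc_subset_uIcc hc))
          hvu.le
    _ = |φ u - φ v| := by
        rw [hslope, abs_div, abs_of_pos hvu, div_mul_cancel₀ _ hvu.ne', abs_sub_comm]

theorem abs_log_abs_sub_le_of_le_abs {h : ℝ → ℝ} (hh : Differentiable ℝ h) {c M u v : ℝ}
    (hc : 0 < c) (hlow : ∀ t ∈ uIcc u v, c ≤ |h t|) (hM : ∀ t ∈ uIcc u v, |deriv h t| ≤ M) :
    |Real.log (|h u|) - Real.log (|h v|)| ≤ M / c * |u - v| := by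
  have hne : ∀ t ∈ uIcc u v, h t ≠ 0 := fun t ht h0 => by
    have := hlow t ht
    rw [h0, abs_zero] at this
    linarith
  have hderiv : ∀ t ∈ uIcc u v,
      HasDerivWithinAt (fun t => Real.log (h t)) ((h t)⁻¹ * deriv h t) (uIcc u v) t :=
    fun t ht => ((Real.hasDerivAt_log (hne t ht)).comp t (hh t).hasDerivAt).hasDerivWithinAt
  have hbound : ∀ t ∈ uIcc u v, ‖(h t)⁻¹ * deriv h t‖ ≤ M / c := fun t ht => by
    rw [Real.norm_eq_abs, abs_mul, abs_inv, inv_mul_eq_div]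
    exact div_le_div₀ ((abs_nonneg _).trans (hM t ht)) (hM t ht) hc (hlow t ht)
  simpa only [Real.log_abs, Real.norm_eq_abs] using
    (convex_uIcc u v).norm_image_sub_le_of_norm_hasDerivWithin_le hderiv hbound
      right_mem_uIcc left_mem_uIcc

theorem abs_log_abs_mul_deriv_sub_le {ψ : ℝ → ℝ} (hψ' : Differentiable ℝ (deriv ψ))
    {L M c u v : ℝ} (hL : 0 < L) (hc : 0 < c) (hM : ∀ t, |deriv (deriv ψ) t| ≤ M)
    (hlow : ∀ t ∈ uIcc u v, c ≤ |deriv ψ t|) :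
    |Real.log (|L * deriv ψ u|) - Real.log (|L * deriv ψ v|)| ≤ M / c * |u - v| := by
  have := abs_log_abs_sub_le_of_le_abs (h := fun t => L * deriv ψ t) (c := L * c) (M := L * M)
    (hψ'.const_mul L) (by positivity)
    (fun t ht => by
      rw [abs_mul, abs_of_pos hL]
      exact mul_le_mul_of_nonneg_left (hlow t ht) hL.le)
    (fun t _ => by
      rw [deriv_const_mul L (hψ' t), abs_mul, abs_of_pos hL]
      exact mul_le_mul_of_nonneg_left (hM t) hL.le)
  rwa [mul_div_mul_left _ _ hL.ne'] at this

theorem mul_sum_range_le_two_mul {d : ℕ → ℝ} {c : ℝ} (hc : 2 ≤ c) (hd : ∀ j, 0 ≤ d j) :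
    ∀ i : ℕ, (∀ j < i, c * d j ≤ d (j + 1)) → c * ∑ j ∈ Finset.range i, d j ≤ 2 * d i
  | 0, _ => by simpa using hd 0
  | i + 1, hexp => by
    have ih := mul_sum_range_le_two_mul hc hd i fun j hj => hexp j (by omega)
    have hi := hexp i (by omega)
    rw [Finset.sum_range_succ, mul_add]
    nlinarith [hd i]

theorem two_le_rpow_one_add {L η : ℝ} (hL : 16 ≤ L) (hη : -(3:ℝ) / 4 ≤ η) :
    2 ≤ L ^ (1 + η) :=
  calc (2:ℝ) ≤ L ^ (4:ℝ)⁻¹ :=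
        (Real.le_rpow_inv_iff_of_pos (by norm_num) (by linarith) (by norm_num)).mpr
          (by norm_num; linarith)
    _ ≤ L ^ (1 + η) := Real.rpow_le_rpow_of_exponent_le (by linarith) (by linarith)

theorem abs_deriv_deriv_le_psiC2norm {ψ : ℝ → ℝ} (hH4 : H4 ψ) (x : ℝ) :
    |deriv (deriv ψ) x| ≤ psiC2norm ψ :=
  le_ciSup (f := fun x => |deriv (deriv ψ) x|) ⟨1 / 10, forall_mem_range.2 hH4.2⟩ x

theorem rpow_lt_abs_deriv_of_notMem_Bset {ψ : ℝ → ℝ} {K₁ L η x : ℝ} (hK1 : K1hyp ψ K₁)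
    (hx : x ∉ Bset ψ K₁ L η) : L ^ η < |deriv ψ x| := by
  have hdist : K₁⁻¹ * L ^ η < dS1Set x (Crit ψ) := not_le.mp hx
  calc L ^ η = K₁ * (K₁⁻¹ * L ^ η) := by rw [mul_inv_cancel_left₀ hK1.1.ne']
    _ < K₁ * dS1Set x (Crit ψ) := mul_lt_mul_of_pos_left hdist hK1.1
    _ ≤ |deriv ψ x| := hK1.2 x

section liftOrbit

variable {ψ : ℝ → ℝ} {L a : ℝ} {ω : ℕ → ℝ}

theorem continuous_liftOrbit (hψ : Continuous ψ) (n : ℕ) :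
    Continuous fun x => liftOrbit ψ L a ω x n := by
  induction n with
  | zero => exact continuous_id
  | succ n ih =>
    exact (continuous_const.mul (hψ.comp (ih.add continuous_const))).add continuous_const

theorem liftOrbit_succ_sub (x y : ℝ) (n : ℕ) :
    liftOrbit ψ L a ω x (n + 1) - liftOrbit ψ L a ω y (n + 1) =
      L * (ψ (liftOrbit ψ L a ω x n + ω n) - ψ (liftOrbit ψ L a ω y n + ω n)) := by
  simp only [liftOrbit]
  ring

theorem mul_abs_liftOrbit_sub_le_succ (hψ : Differentiable ℝ ψ) (hL : 0 ≤ L) {c x y : ℝ}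
    {n : ℕ}
    (hc : ∀ t ∈ uIcc (liftOrbit ψ L a ω x n + ω n) (liftOrbit ψ L a ω y n + ω n),
      c ≤ |deriv ψ t|) :
    L * c * |liftOrbit ψ L a ω x n - liftOrbit ψ L a ω y n| ≤
      |liftOrbit ψ L a ω x (n + 1) - liftOrbit ψ L a ω y (n + 1)| := by
  have hmvt := abs_sub_le_abs_image_sub_of_le_abs_deriv hψ hc
  rw [add_sub_add_right_eq_sub] at hmvt
  rw [liftOrbit_succ_sub, abs_mul, abs_of_nonneg hL, mul_assoc]
  exact mul_le_mul_of_nonneg_left hmvt hL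

theorem rpow_lt_abs_deriv_of_liftOrbit_notMem_Bset (hψ : Continuous ψ) {K₁ η : ℝ}
    (hK1 : K1hyp ψ K₁) {y y' : ℝ} {j : ℕ}
    (havoid : ∀ z ∈ uIcc y y', liftOrbit ψ L a ω z j + ω j ∉ Bset ψ K₁ L η) :
    ∀ t ∈ uIcc (liftOrbit ψ L a ω y j + ω j) (liftOrbit ψ L a ω y' j + ω j),
      L ^ η < |deriv ψ t| := by
  intro t ht
  obtain ⟨z, hz, rfl⟩ := intermediate_value_uIcc
    ((continuous_liftOrbit hψ j).add continuous_const).continuousOn ht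
  exact rpow_lt_abs_deriv_of_notMem_Bset hK1 (havoid z hz)

theorem abs_logDerivSumLift_sub_le (y y' : ℝ) (i : ℕ) :
    |logDerivSumLift ψ L a ω y i - logDerivSumLift ψ L a ω y' i| ≤
      ∑ j ∈ Finset.range i, |Real.log (|L * deriv ψ (liftOrbit ψ L a ω y j + ω j)|) -
        Real.log (|L * deriv ψ (liftOrbit ψ L a ω y' j + ω j)|)| := by
  rw [logDerivSumLift, logDerivSumLift, ← Finset.sum_sub_distrib]
  exact Finset.abs_sum_le_sum_abs _ _

end liftOrbit

/-- **Lemma 4.4** (short-distance distortion).  There is `L₀ = L₀(ψ)` such that for all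
`L ≥ L₀`, `η ∈ [-3/4, 0]`, any sample `ω`, `y, y' ∈ S¹`, `i ≥ 1` and `J` the interval
between `y` and `y'`: if `f^j_ω(J) + ω_j ⊆ B(η)ᶜ` for all `0 ≤ j < i`, then
`|log ((f^i_ω)'(y) / (f^i_ω)'(y'))| ≤ 2 ‖ψ''‖_{C⁰} L^{-1-2η} |f̃^i_ω(y) - f̃^i_ω(y')|`. -/
theorem lemma_shortDist (ψ : ℝ → ℝ) (hψ : PsiReg ψ) (hH4 : H4 ψ)
    (K₁ : ℝ) (hK1 : K1hyp ψ K₁) :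
    ∃ L₀ : ℝ, 0 < L₀ ∧ ∀ L : ℝ, L₀ ≤ L → ∀ a ∈ Ico (0:ℝ) 1,
      ∀ ε : ℝ, 0 < ε → ∀ η : ℝ, η ∈ Icc (-(3:ℝ) / 4) 0 →
        ∀ ω : ℕ → ℝ, (∀ i, |ω i| ≤ ε) →
          ∀ y y' : ℝ, y ∈ Ico (0:ℝ) 1 → y' ∈ Ico (0:ℝ) 1 →
            ∀ i : ℕ, 1 ≤ i →
              (∀ j : ℕ, j < i → ∀ z ∈ uIcc y y',
                liftOrbit ψ L a ω z j + ω j ∉ Bset ψ K₁ L η) →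
              |logDerivSumLift ψ L a ω y i - logDerivSumLift ψ L a ω y' i| ≤
                2 * psiC2norm ψ * L ^ (-(1:ℝ) - 2 * η) *
                  |liftOrbit ψ L a ω y i - liftOrbit ψ L a ω y' i| := by
  refine ⟨16, by norm_num, fun L hL16 a _ _ _ η hη ω _ y y' _ _ i _ havoid => ?_⟩
  have hψd : Differentiable ℝ ψ := hψ.2.1.differentiable (by norm_num)
  have hψ'd : Differentiable ℝ (deriv ψ) :=
    (hψ.2.1.deriv' (n := 1)).differentiable one_ne_zero
  have hL0 : 0 < L := by linarith
  set M := psiC2norm ψ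
  have hM : 0 ≤ M := (abs_nonneg _).trans (abs_deriv_deriv_le_psiC2norm hH4 0)
  set g : ℕ → ℝ → ℝ := fun j z => liftOrbit ψ L a ω z j + ω j
  set d : ℕ → ℝ := fun j => |liftOrbit ψ L a ω y j - liftOrbit ψ L a ω y' j|
  have hlow : ∀ j < i, ∀ t ∈ uIcc (g j y) (g j y'), L ^ η < |deriv ψ t| := fun j hj =>
    rpow_lt_abs_deriv_of_liftOrbit_notMem_Bset hψd.continuous hK1 (havoid j hj)
  have hsum : L ^ (1 + η) * ∑ j ∈ Finset.range i, d j ≤ 2 * d i := by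
    refine mul_sum_range_le_two_mul (two_le_rpow_one_add hL16 hη.1) (fun _ => abs_nonneg _) i
      fun j hj => ?_
    rw [Real.rpow_add hL0, Real.rpow_one]
    exact mul_abs_liftOrbit_sub_le_succ hψd hL0.le fun t ht => (hlow j hj t ht).le
  have hterm : ∀ j < i, |Real.log (|L * deriv ψ (g j y)|) - Real.log (|L * deriv ψ (g j y')|)|
      ≤ M / L ^ η * d j := fun j hj => by
    have := abs_log_abs_mul_deriv_sub_le hψ'd hL0 (by positivity)
      (abs_deriv_deriv_le_psiC2norm hH4) fun t ht => (hlow j hj t ht).le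
    rwa [add_sub_add_right_eq_sub] at this
  have hexponent : L ^ (-(1:ℝ) - 2 * η) = (L ^ η * L ^ (1 + η))⁻¹ := by
    rw [← Real.rpow_add hL0, ← Real.rpow_neg hL0.le]
    ring_nf
  calc _ ≤ ∑ j ∈ Finset.range i, M / L ^ η * d j :=
        (abs_logDerivSumLift_sub_le y y' i).trans <|
          Finset.sum_le_sum fun j hj => hterm j (Finset.mem_range.mp hj)
    _ = M * (L ^ η * L ^ (1 + η))⁻¹ * (L ^ (1 + η) * ∑ j ∈ Finset.range i, d j) := by
        rw [← Finset.mul_sum]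
        field_simp
    _ ≤ M * (L ^ η * L ^ (1 + η))⁻¹ * (2 * d i) := by gcongr
    _ = 2 * M * L ^ (-(1:ℝ) - 2 * η) * d i := by
        rw [hexponent]
        ring
end
end
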